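/- Let N ≥ M ≥ 1, σ > 0, P > 0, let W be the N×N matrix with entries W_{n,k} = exp(−2πi·n·k/N), let A be an N×M binary matrix satisfying (C1) and (C2), let U ∈ ℂ^{M×M} with trace(U^H U) ≤ P, and let h̃_1,…,h̃_M ∈ ℂ^N. For each m set q_{m,j} = h̃_m^H W A u_j, c_m = Σ_{j≠m}|q_{m,j}|² + σ², and e_m(δ) = |1 − δ·q_{m,m}|² + |δ|²·c_m. Then for every δ ∈ ℂ^M and ω ∈ (0,∞)^M, Σ_{m=1}^M (ω_m·e_m(δ_m) − log ω_m − 1) ≥ −Σ_{m=1}^M log(1 + N·‖h̃_m‖²·P/σ²). -/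

import Mathlib

/-! Each summand is bounded separately. Minimizing over `ω_m` turns it into `log e_m(δ_m)`, and
minimizing over `δ_m` turns `e_m` into the MMSE `c_m / (|q_{m,m}|² + c_m)`, which is at least
`σ² / (∑_j |q_{m,j}|² + σ²)`. By Cauchy–Schwarz, `∑_j |q_{m,j}|² ≤ ‖h̃_m‖² ‖W A U‖_F²`, and
`‖W A U‖_F² = N ‖A U‖_F² ≤ N ‖U‖_F² ≤ N P`: the DFT matrix satisfies `Wᴴ W = N I`, and a
nonnegative matrix with row and column sums at most `1` is a contraction for the Frobenius norm. -/

open Finset Complex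
open scoped Matrix

theorem dft_conjTranspose_mul_self {N : ℕ} (W : Matrix (Fin N) (Fin N) ℂ)
    (hW : ∀ n k : Fin N, W n k = exp (-(2 * Real.pi * I * (n : ℕ) * (k : ℕ)) / (N : ℂ))) :
    Wᴴ * W = (N : ℂ) • 1 := by
  ext a b
  set ζ := exp (2 * Real.pi * I / N)
  have hζ : IsPrimitiveRoot ζ N := isPrimitiveRoot_exp N (Fin.pos a).ne'
  have hW' : ∀ n k : Fin N, W n k = ζ⁻¹ ^ ((n : ℕ) * k) := by
    intro n k
    rw [hW, ← exp_neg, ← exp_nat_mul]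
    congr 1
    push_cast
    ring
  have hconj : (starRingEnd ℂ) ζ⁻¹ = ζ := by
    rw [map_inv₀, ← exp_conj, ← exp_neg]
    congr 1
    simp [map_div₀, map_ofNat, neg_div]
  set z := ζ ^ (a : ℕ) * ζ⁻¹ ^ (b : ℕ)
  have hterm : ∀ n : Fin N, star (W n a) * W n b = z ^ (n : ℕ) := by
    intro n
    rw [hW', hW', Complex.star_def, map_pow, hconj, mul_pow, ← pow_mul, ← pow_mul,
      mul_comm (a : ℕ), mul_comm (b : ℕ)]
  simp only [Matrix.mul_apply, Matrix.conjTranspose_apply, hterm, Matrix.smul_apply,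
    Matrix.one_apply, smul_eq_mul, mul_ite, mul_one, mul_zero]
  rw [Fin.sum_univ_eq_sum_range (fun n => z ^ n)]
  split_ifs with hab
  · subst hab
    simp [z, ← mul_pow, hζ.ne_zero (Fin.pos a).ne']
  · have hz_pow : z ^ N = 1 := by
      rw [mul_pow, ← pow_mul, ← pow_mul, mul_comm _ N, mul_comm _ N, pow_mul, pow_mul, inv_pow,
        hζ.pow_eq_one]
      simp
    have hz_ne : z ≠ 1 := by
      intro h
      refine hab (Fin.ext (hζ.pow_inj a.isLt b.isLt ?_))
      rw [← mul_inv_eq_one₀ (pow_ne_zero _ (hζ.ne_zero (Fin.pos a).ne')), ← inv_pow]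
      exact h
    have := geom_sum_mul z N
    rw [hz_pow, sub_self] at this
    exact (mul_eq_zero.mp this).resolve_right (sub_ne_zero.mpr hz_ne)

variable {ι κ μ : Type*} [Fintype ι] [Fintype κ] [Fintype μ]

theorem re_trace_conjTranspose_mul_self (M : Matrix ι κ ℂ) :
    (Mᴴ * M).trace.re = ∑ i, ∑ j, ‖M i j‖ ^ 2 := by
  simp only [Matrix.trace, Matrix.diag_apply, Matrix.mul_apply, Matrix.conjTranspose_apply,
    Complex.star_def, conj_mul', ← ofReal_pow, ← ofReal_sum, ofReal_re]
  exact sum_comm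

theorem sum_sum_norm_sq_mul_eq_of_conjTranspose_mul_self [DecidableEq ι] {W : Matrix ι ι ℂ}
    {r : ℝ} (hW : Wᴴ * W = (r : ℂ) • 1) (B : Matrix ι κ ℂ) :
    ∑ i, ∑ j, ‖(W * B) i j‖ ^ 2 = r * ∑ i, ∑ j, ‖B i j‖ ^ 2 := by
  rw [← re_trace_conjTranspose_mul_self, ← re_trace_conjTranspose_mul_self,
    Matrix.conjTranspose_mul, Matrix.mul_assoc, ← Matrix.mul_assoc Wᴴ, hW, Matrix.smul_mul,
    Matrix.one_mul, Matrix.mul_smul, Matrix.trace_smul, smul_eq_mul, re_ofReal_mul]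

theorem sum_sum_norm_sq_map_ofReal_mul_le {A : Matrix ι κ ℝ} (hA : ∀ i k, 0 ≤ A i k)
    (hcol : ∀ k, ∑ i, A i k ≤ 1) (hrow : ∀ i, ∑ k, A i k ≤ 1) (U : Matrix κ μ ℂ) :
    ∑ i, ∑ j, ‖(A.map ((↑) : ℝ → ℂ) * U) i j‖ ^ 2 ≤ ∑ k, ∑ j, ‖U k j‖ ^ 2 := by
  have hentry : ∀ i j, ‖(A.map ((↑) : ℝ → ℂ) * U) i j‖ ^ 2 ≤ ∑ k, A i k * ‖U k j‖ ^ 2 := by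
    intro i j
    calc ‖(A.map ((↑) : ℝ → ℂ) * U) i j‖ ^ 2 ≤ (∑ k, A i k * ‖U k j‖) ^ 2 := by
          gcongr
          rw [Matrix.mul_apply]
          refine (norm_sum_le _ _).trans_eq (sum_congr rfl fun k _ => ?_)
          rw [Matrix.map_apply, norm_mul, norm_real, Real.norm_of_nonneg (hA i k)]
      _ ≤ (∑ k, A i k) * ∑ k, A i k * ‖U k j‖ ^ 2 :=
          sum_sq_le_sum_mul_sum_of_sq_le_mul _ (fun k _ => hA i k)
            (fun k _ => mul_nonneg (hA i k) (sq_nonneg _))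
            (fun k _ => (by ring : (A i k * ‖U k j‖) ^ 2 = A i k * (A i k * ‖U k j‖ ^ 2)).le)
      _ ≤ ∑ k, A i k * ‖U k j‖ ^ 2 :=
          mul_le_of_le_one_left (sum_nonneg fun k _ => mul_nonneg (hA i k) (sq_nonneg _)) (hrow i)
  calc ∑ i, ∑ j, ‖(A.map ((↑) : ℝ → ℂ) * U) i j‖ ^ 2 ≤ ∑ i, ∑ j, ∑ k, A i k * ‖U k j‖ ^ 2 := by
        gcongr with i _ j _
        exact hentry i j
    _ = ∑ k, (∑ i, A i k) * ∑ j, ‖U k j‖ ^ 2 := by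
        simp only [sum_mul, mul_sum]
        rw [sum_comm]
        exact (sum_congr rfl fun j _ => sum_comm).trans sum_comm
    _ ≤ ∑ k, ∑ j, ‖U k j‖ ^ 2 := by
        gcongr with k
        exact mul_le_of_le_one_left (by positivity) (hcol k)

theorem sum_norm_sq_sum_conj_mul_le (h : ι → ℂ) (M : Matrix ι κ ℂ) :
    ∑ j, ‖∑ i, starRingEnd ℂ (h i) * M i j‖ ^ 2 ≤ (∑ i, ‖h i‖ ^ 2) * ∑ i, ∑ j, ‖M i j‖ ^ 2 := by
  have hcol : ∀ j, ‖∑ i, starRingEnd ℂ (h i) * M i j‖ ^ 2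
      ≤ (∑ i, ‖h i‖ ^ 2) * ∑ i, ‖M i j‖ ^ 2 := by
    intro j
    calc ‖∑ i, starRingEnd ℂ (h i) * M i j‖ ^ 2 ≤ (∑ i, ‖h i‖ * ‖M i j‖) ^ 2 := by
          gcongr
          refine (norm_sum_le _ _).trans_eq (sum_congr rfl fun i _ => ?_)
          rw [norm_mul, norm_conj]
      _ ≤ _ := sum_mul_sq_le_sq_mul_sq _ _ _
  calc ∑ j, ‖∑ i, starRingEnd ℂ (h i) * M i j‖ ^ 2
      ≤ ∑ j, (∑ i, ‖h i‖ ^ 2) * ∑ i, ‖M i j‖ ^ 2 := sum_le_sum fun j _ => hcol j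
    _ = (∑ i, ‖h i‖ ^ 2) * ∑ i, ∑ j, ‖M i j‖ ^ 2 := by rw [← mul_sum, sum_comm]

theorem sum_norm_sq_sum_conj_mul_dft_mul_le {N M : ℕ} {W : Matrix (Fin N) (Fin N) ℂ}
    (hW : ∀ n k : Fin N, W n k = exp (-(2 * Real.pi * I * (n : ℕ) * (k : ℕ)) / (N : ℂ)))
    {A : Matrix (Fin N) (Fin M) ℝ} (hA : ∀ n m, 0 ≤ A n m) (hcol : ∀ m, ∑ n, A n m ≤ 1)
    (hrow : ∀ n, ∑ m, A n m ≤ 1) {U : Matrix (Fin M) κ ℂ} {P : ℝ}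
    (hpow : (Uᴴ * U).trace.re ≤ P) (h : Fin N → ℂ) :
    ∑ j, ‖∑ i, starRingEnd ℂ (h i) * (W * A.map ((↑) : ℝ → ℂ) * U) i j‖ ^ 2
      ≤ N * (∑ i, ‖h i‖ ^ 2) * P := by
  have hWW : Wᴴ * W = ((N : ℝ) : ℂ) • 1 := by
    rw [ofReal_natCast]
    exact dft_conjTranspose_mul_self W hW
  calc ∑ j, ‖∑ i, starRingEnd ℂ (h i) * (W * A.map ((↑) : ℝ → ℂ) * U) i j‖ ^ 2
      ≤ (∑ i, ‖h i‖ ^ 2) * ∑ i, ∑ j, ‖(W * (A.map ((↑) : ℝ → ℂ) * U)) i j‖ ^ 2 := by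
        rw [← Matrix.mul_assoc]
        exact sum_norm_sq_sum_conj_mul_le h _
    _ = (∑ i, ‖h i‖ ^ 2) * (N * ∑ i, ∑ j, ‖(A.map ((↑) : ℝ → ℂ) * U) i j‖ ^ 2) := by
        rw [sum_sum_norm_sq_mul_eq_of_conjTranspose_mul_self hWW]
    _ ≤ (∑ i, ‖h i‖ ^ 2) * (N * (Uᴴ * U).trace.re) := by
        rw [re_trace_conjTranspose_mul_self]
        gcongr
        exact sum_sum_norm_sq_map_ofReal_mul_le hA hcol hrow U
    _ ≤ (∑ i, ‖h i‖ ^ 2) * (N * P) := by gcongr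
    _ = N * (∑ i, ‖h i‖ ^ 2) * P := by ring

/-- Completing the square in `δ`: the minimum, at `δ = conj q / (‖q‖² + c)`, is the MMSE
`c / (‖q‖² + c)`. -/
theorem mmse_mul_eq (q δ : ℂ) (c : ℝ) :
    (‖1 - δ * q‖ ^ 2 + ‖δ‖ ^ 2 * c) * (‖q‖ ^ 2 + c)
      = c + ‖δ * ((‖q‖ ^ 2 + c : ℝ) : ℂ) - starRingEnd ℂ q‖ ^ 2 := by
  simp only [Complex.sq_norm, normSq_apply, sub_re, sub_im, mul_re, mul_im, ofReal_re, ofReal_im,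
    one_re, one_im, conj_re, conj_im]
  ring

theorem log_le_mul_sub_log_sub_one {ω e : ℝ} (hω : 0 < ω) (he : 0 < e) :
    Real.log e ≤ ω * e - Real.log ω - 1 := by
  have h := Real.log_le_sub_one_of_pos (mul_pos hω he)
  rw [Real.log_mul hω.ne' he.ne'] at h
  linarith

theorem neg_log_one_add_le_wmmse {q δ : ℂ} {c s X ω : ℝ} (hs : 0 < s) (hsc : s ≤ c)
    (hD : ‖q‖ ^ 2 + c ≤ s * (1 + X)) (hω : 0 < ω) :
    -Real.log (1 + X) ≤ ω * (‖1 - δ * q‖ ^ 2 + ‖δ‖ ^ 2 * c) - Real.log ω - 1 := by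
  set e := ‖1 - δ * q‖ ^ 2 + ‖δ‖ ^ 2 * c
  have he : 0 ≤ e := add_nonneg (sq_nonneg _) (mul_nonneg (sq_nonneg _) (hs.le.trans hsc))
  have hce : c ≤ e * (‖q‖ ^ 2 + c) := mmse_mul_eq q δ c ▸ le_add_of_nonneg_right (sq_nonneg _)
  have hX : 0 < 1 + X := pos_of_mul_pos_right (by nlinarith [sq_nonneg ‖q‖]) hs.le
  have hmmse : (1 + X)⁻¹ ≤ e := by
    rw [inv_le_iff_one_le_mul₀ hX]
    refine le_of_mul_le_mul_left ?_ hs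
    calc s * 1 ≤ e * (‖q‖ ^ 2 + c) := by linarith
      _ ≤ e * (s * (1 + X)) := by gcongr
      _ = s * (e * (1 + X)) := by ring
  have hX_inv : 0 < (1 + X)⁻¹ := inv_pos.mpr hX
  calc -Real.log (1 + X) = Real.log (1 + X)⁻¹ := (Real.log_inv _).symm
    _ ≤ Real.log e := Real.log_le_log hX_inv hmmse
    _ ≤ ω * e - Real.log ω - 1 := log_le_mul_sub_log_sub_one hω (hX_inv.trans_le hmmse)

theorem stmt_12_general (N M : ℕ) (σ P : ℝ) (hσ : 0 < σ)
    (W : Matrix (Fin N) (Fin N) ℂ)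
    (hW : ∀ n k : Fin N,
      W n k = Complex.exp (-(2 * Real.pi * Complex.I * (n : ℕ) * (k : ℕ)) / (N : ℂ)))
    (A : Matrix (Fin N) (Fin M) ℝ)
    (hbin : ∀ n m, A n m = 0 ∨ A n m = 1)
    (hC1 : ∀ m, ∑ n, A n m = 1)
    (hC2 : ∀ n, ∑ m, A n m ≤ 1)
    (Ac : Matrix (Fin N) (Fin M) ℂ) (hAc : ∀ n m, Ac n m = (A n m : ℂ))
    (U : Matrix (Fin M) (Fin M) ℂ)
    (hpow : ((U.conjTranspose * U).trace).re ≤ P)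
    (htilde : Fin M → Fin N → ℂ)
    (q : Fin M → Fin M → ℂ)
    (hq : ∀ m j, q m j = ∑ i, (starRingEnd ℂ) (htilde m i) * (W * Ac * U) i j)
    (c : Fin M → ℝ)
    (hc : ∀ m, c m = ∑ j ∈ univ.erase m, ‖q m j‖ ^ 2 + σ ^ 2)
    (e : Fin M → ℂ → ℝ)
    (he : ∀ m δ, e m δ = ‖1 - δ * q m m‖ ^ 2 + ‖δ‖ ^ 2 * c m) :
    ∀ (δ : Fin M → ℂ) (ω : Fin M → ℝ), (∀ m, 0 < ω m) →
      -∑ m, Real.log (1 + (N : ℝ) * (∑ i, ‖htilde m i‖ ^ 2) * P / σ ^ 2) ≤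
        ∑ m, (ω m * e m (δ m) - Real.log (ω m) - 1) := by
  intro δ ω hω
  obtain rfl : Ac = A.map ((↑) : ℝ → ℂ) := Matrix.ext hAc
  have hA : ∀ n m, 0 ≤ A n m := fun n m => by rcases hbin n m with h | h <;> simp [h]
  rw [← sum_neg_distrib]
  refine sum_le_sum fun m _ => ?_
  have hgain : ∑ j, ‖q m j‖ ^ 2 ≤ N * (∑ i, ‖htilde m i‖ ^ 2) * P := by
    simp only [hq]
    exact sum_norm_sq_sum_conj_mul_dft_mul_le hW hA (fun k => (hC1 k).le) hC2 hpow (htilde m)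
  have hσc : σ ^ 2 ≤ c m := by
    rw [hc]
    exact le_add_of_nonneg_left (sum_nonneg fun j _ => sq_nonneg _)
  have hD : ‖q m m‖ ^ 2 + c m ≤ σ ^ 2 * (1 + N * (∑ i, ‖htilde m i‖ ^ 2) * P / σ ^ 2) := by
    rw [hc, ← add_assoc, add_sum_erase univ (fun j => ‖q m j‖ ^ 2) (mem_univ m), mul_add, mul_one,
      mul_div_cancel₀ _ (by positivity)]
    linarith
  rw [he]
  exact neg_log_one_add_le_wmmse (by positivity) hσc hD (hω m)

/-- Lower bound for the weighted-MMSE objective over the feasible set. With `W` the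
`N`-point DFT matrix, `A` a 0/1 assignment matrix with (C1), (C2), `U` a precoder with
`trace(UᴴU) ≤ P`, effective channels `h̃_m`, coefficients `q_{m,j} = h̃_mᴴ W A u_j`,
`c_m = ∑_{j≠m}|q_{m,j}|² + σ²`, and `e_m(δ) = |1 − δ q_{m,m}|² + |δ|² c_m`, for every
`δ ∈ ℂ^M` and positive `ω ∈ ℝ^M`,
`∑_m (ω_m e_m(δ_m) − log ω_m − 1) ≥ −∑_m log(1 + N‖h̃_m‖²P/σ²)`. -/
theorem stmt_12 (N M : ℕ) (hM : 1 ≤ M) (hNM : M ≤ N) (σ P : ℝ) (hσ : 0 < σ) (hP : 0 < P)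
    (W : Matrix (Fin N) (Fin N) ℂ)
    (hW : ∀ n k : Fin N,
      W n k = Complex.exp (-(2 * Real.pi * Complex.I * (n : ℕ) * (k : ℕ)) / (N : ℂ)))
    (A : Matrix (Fin N) (Fin M) ℝ)
    (hbin : ∀ n m, A n m = 0 ∨ A n m = 1)
    (hC1 : ∀ m, ∑ n, A n m = 1)
    (hC2 : ∀ n, ∑ m, A n m ≤ 1)
    (Ac : Matrix (Fin N) (Fin M) ℂ) (hAc : ∀ n m, Ac n m = (A n m : ℂ))
    (U : Matrix (Fin M) (Fin M) ℂ)
    (hpow : ((U.conjTranspose * U).trace).re ≤ P)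
    (htilde : Fin M → Fin N → ℂ)
    (q : Fin M → Fin M → ℂ)
    (hq : ∀ m j, q m j = ∑ i, (starRingEnd ℂ) (htilde m i) * (W * Ac * U) i j)
    (c : Fin M → ℝ)
    (hc : ∀ m, c m = ∑ j ∈ univ.erase m, ‖q m j‖ ^ 2 + σ ^ 2)
    (e : Fin M → ℂ → ℝ)
    (he : ∀ m δ, e m δ = ‖1 - δ * q m m‖ ^ 2 + ‖δ‖ ^ 2 * c m) :
    ∀ (δ : Fin M → ℂ) (ω : Fin M → ℝ), (∀ m, 0 < ω m) →
      -∑ m, Real.log (1 + (N : ℝ) * (∑ i, ‖htilde m i‖ ^ 2) * P / σ ^ 2) ≤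
        ∑ m, (ω m * e m (δ m) - Real.log (ω m) - 1) :=
  stmt_12_general N M σ P hσ W hW A hbin hC1 hC2 Ac hAc U hpow htilde q hq c hc e he
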